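/- arXiv:2605.10520 — 2 statements merged into one kernel-verified Lean document; each statement's English description precedes it below -/
import Mathlib

section
/- Non-degeneracy implies an isolated global minimum of the photometric cost (Lemma on non-degeneracy): let h : ℝ³∖{0} → ℝ be twice continuously differentiable and 0-homogeneous, and suppose that for every nonzero trace-free matrix Δ ∈ sl(3,ℝ) one has ∫_{S²} ⟨∇h(x), Δx⟩² dσ(x) > 0. Define the cost C : SL(3,ℝ) → ℝ by C(E) := ½ ∫_{S²} ( h(E⁻¹x) − h(x) )² dσ(x). Then C(I₃) = 0, C ≥ 0 everywhere, and I₃ is an isolated minimum: there exists a neighborhood U of I₃ in SL(3,ℝ) such that C(E) > 0 for every E ∈ U with E ≠ I₃. -/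
open Matrix MeasureTheory
open scoped RealInnerProductSpace

noncomputable section

/-- Euclidean 3-space. -/
abbrev E3 := EuclideanSpace ℝ (Fin 3)
/-- Real 3×3 matrices. -/
abbrev M3 := Matrix (Fin 3) (Fin 3) ℝ
/-- The special linear group SL(3,ℝ). -/
abbrev SL3 := Matrix.SpecialLinearGroup (Fin 3) ℝ

/-- Matrix-vector product as a map on Euclidean 3-space. -/
def mopv (A : M3) (x : E3) : E3 :=
  (WithLp.equiv 2 (Fin 3 → ℝ)).symm (A.mulVec (WithLp.equiv 2 (Fin 3 → ℝ) x))

lemma mopv_mopv (A B : M3) (x : E3) : mopv A (mopv B x) = mopv (A * B) x := by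
  simp [mopv, Matrix.mulVec_mulVec]

lemma mopv_one (x : E3) : mopv 1 x = x := by simp [mopv]

lemma mopv_ne_zero (H : SL3) {x : E3} (hx : x ≠ 0) : mopv (↑H) x ≠ 0 := by
  intro h0
  apply hx
  have h1 : mopv ↑(H⁻¹) (mopv ↑H x) = x := by
    rw [mopv_mopv, ← Matrix.SpecialLinearGroup.coe_mul, inv_mul_cancel,
      Matrix.SpecialLinearGroup.coe_one, mopv_one]
  rw [h0] at h1
  simpa [mopv] using h1.symm

/-- The unit sphere S² in Euclidean 3-space. -/
abbrev S2 : Set E3 := Metric.sphere (0 : E3) 1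

lemma sphere_ne_zero {x : E3} (hx : x ∈ S2) : x ≠ 0 := by
  have h : ‖x‖ = 1 := mem_sphere_zero_iff_norm.mp hx
  intro h0; rw [h0] at h; simp at h

/-- The right action `ρ(H,x) = H⁻¹x/‖H⁻¹x‖` of SL(3,ℝ) on the unit sphere. -/
def ρS (H : SL3) (x : S2) : S2 :=
  ⟨‖mopv ↑(H⁻¹) ↑x‖⁻¹ • mopv ↑(H⁻¹) ↑x,
    mem_sphere_zero_iff_norm.mpr (norm_smul_inv_norm (mopv_ne_zero H⁻¹ (sphere_ne_zero x.2)))⟩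

/-- The standard surface measure on the unit sphere S² (total mass 4π). -/
def σ : Measure S2 := (volume : Measure E3).toSphere

/-! If `C` vanished at points `Eₙ → I₃`, `Eₙ ≠ I₃`, then `h ∘ Eₙ⁻¹ = h` almost everywhere on `S²`.
Write `Eₙ⁻¹ = I₃ + Dₙ` and let `Δ ≠ 0` be a limit of `Dₙ / ‖Dₙ‖`. Differentiating
`det (I₃ + Dₙ) = det I₃` at `I₃` gives `tr Δ = 0`, and differentiating `h (x + Dₙ x) = h x` at `x`
gives `⟨∇h(x), Δx⟩ = 0` for almost every `x ∈ S²`, contradicting non-degeneracy. -/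

open Filter Topology

instance Matrix.firstCountableTopology {m n R : Type*} [Countable m] [Countable n]
    [TopologicalSpace R] [FirstCountableTopology R] : FirstCountableTopology (Matrix m n R) :=
  inferInstanceAs (FirstCountableTopology (m → n → R))

attribute [local instance] Matrix.normedAddCommGroup Matrix.normedSpace

section Calculus

variable {𝕜 : Type*} [NontriviallyNormedField 𝕜]

theorem HasFDerivAt.apply_eq_zero_of_tendsto {E F : Type*} [NormedAddCommGroup E]
    [NormedSpace 𝕜 E] [NormedAddCommGroup F] [NormedSpace 𝕜 F]
    {f : E → F} {f' : E →L[𝕜] F} {x v : E} (hf : HasFDerivAt f f' x)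
    {α : Type*} {l : Filter α} [l.NeBot] {c : α → 𝕜} {d : α → E}
    (hd : Tendsto d l (𝓝 0)) (hcd : Tendsto (fun i => c i • d i) l (𝓝 v))
    (hfd : ∀ᶠ i in l, f (x + d i) = f x) : f' v = 0 := by
  refine tendsto_nhds_unique (hf.hasFDerivWithinAt.lim (s := Set.univ) hd (by simp) hcd) ?_
  exact tendsto_const_nhds.congr' (hfd.mono fun i hi => by simp [hi])

namespace Matrix

variable {n : Type*} [Fintype n] [DecidableEq n]

theorem hasDerivAt_det_one_add_smul (M : Matrix n n 𝕜) :
    HasDerivAt (fun t : 𝕜 => (1 + t • M).det) M.trace 0 := by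
  have := Polynomial.hasDerivAt (det (1 + (Polynomial.X : Polynomial 𝕜) • M.map Polynomial.C)) 0
  rw [derivative_det_one_add_X_smul] at this
  refine this.congr_of_eventuallyEq (Eventually.of_forall fun t => ?_)
  change _ = Polynomial.eval t _
  rw [← Polynomial.coe_evalRingHom, RingHom.map_det, RingHom.mapMatrix_apply]
  refine congrArg det ?_
  ext i j
  by_cases h : i = j <;> simp [h, mul_comm t]

theorem differentiable_det : Differentiable 𝕜 (det : Matrix n n 𝕜 → 𝕜) := by
  rw [show (det : Matrix n n 𝕜 → 𝕜) = _ from funext det_apply]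
  fun_prop

theorem fderiv_det_one_apply (M : Matrix n n 𝕜) :
    fderiv 𝕜 det (1 : Matrix n n 𝕜) M = M.trace := by
  have hline : HasDerivAt (fun t : 𝕜 => 1 + t • M) M 0 := by
    have := ((hasDerivAt_id' (0 : 𝕜)).smul_const M).const_add (1 : Matrix n n 𝕜)
    rwa [one_smul] at this
  exact ((differentiable_det _).hasFDerivAt.comp_hasDerivAt_of_eq 0 hline (by simp)).unique
    (hasDerivAt_det_one_add_smul M)

theorem trace_eq_zero_of_tendsto {α : Type*} {l : Filter α} [l.NeBot] {c : α → 𝕜}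
    {D : α → Matrix n n 𝕜} {Δ : Matrix n n 𝕜} (hD : Tendsto D l (𝓝 0))
    (hcD : Tendsto (fun i => c i • D i) l (𝓝 Δ)) (hdet : ∀ᶠ i in l, (1 + D i).det = 1) :
    Δ.trace = 0 := by
  rw [← fderiv_det_one_apply]
  exact (differentiable_det _).hasFDerivAt.apply_eq_zero_of_tendsto hD hcD
    (hdet.mono fun i hi => by rw [hi, det_one])

end Matrix

end Calculus

theorem exists_subseq_tendsto_inv_norm_smul {E : Type*} [NormedAddCommGroup E]
    [NormedSpace ℝ E] [ProperSpace E] {d : ℕ → E} (hd : ∀ n, d n ≠ 0) :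
    ∃ v ≠ 0, ∃ φ : ℕ → ℕ, StrictMono φ ∧
      Tendsto (fun k => ‖d (φ k)‖⁻¹ • d (φ k)) atTop (𝓝 v) := by
  obtain ⟨v, hv, φ, hφ, hlim⟩ := (isCompact_sphere (0 : E) 1).tendsto_subseq
    fun n => mem_sphere_zero_iff_norm.2 (norm_smul_inv_norm (𝕜 := ℝ) (hd n))
  exact ⟨v, Metric.ne_of_mem_sphere hv one_ne_zero, φ, hφ, hlim⟩

theorem Matrix.SpecialLinearGroup.tendsto_coe_inv {n R : Type*} [Fintype n] [DecidableEq n]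
    [CommRing R] [TopologicalSpace R] [IsTopologicalRing R] {α : Type*} {l : Filter α}
    {E : α → SpecialLinearGroup n R} (hE : Tendsto (fun i => (E i : Matrix n n R)) l (𝓝 1)) :
    Tendsto (fun i => ((E i)⁻¹ : SpecialLinearGroup n R) : α → Matrix n n R) l (𝓝 1) := by
  simpa [Function.comp_def, coe_inv] using (continuous_id.matrix_adjugate.tendsto 1).comp hE

lemma mopv_add (A B : M3) (x : E3) : mopv (A + B) x = mopv A x + mopv B x := by
  simp [mopv, Matrix.add_mulVec]

lemma mopv_smul (c : ℝ) (A : M3) (x : E3) : mopv (c • A) x = c • mopv A x := by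
  simp [mopv, Matrix.smul_mulVec]

lemma continuous_mopv_left (x : E3) : Continuous fun A : M3 => mopv A x :=
  (PiLp.continuous_toLp 2 _).comp (continuous_id.matrix_mulVec continuous_const)

lemma continuous_mopv_right (A : M3) : Continuous (mopv A) :=
  (PiLp.continuous_toLp 2 _).comp (continuous_const.matrix_mulVec (PiLp.continuous_ofLp 2 _))

lemma inner_gradient_mopv_eq_zero_of_tendsto {h : E3 → ℝ} {x : E3} (hx : DifferentiableAt ℝ h x)
    {α : Type*} {l : Filter α} [l.NeBot] {c : α → ℝ} {D : α → M3} {Δ : M3}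
    (hD : Tendsto D l (𝓝 0)) (hcD : Tendsto (fun i => c i • D i) l (𝓝 Δ))
    (hinv : ∀ᶠ i in l, h (mopv (1 + D i) x) = h x) :
    ⟪gradient h x, mopv Δ x⟫ = 0 := by
  rw [gradient, InnerProductSpace.toDual_symm_apply]
  refine hx.hasFDerivAt.apply_eq_zero_of_tendsto (l := l) (c := c)
    (d := fun i => mopv (D i) x) ?_ ?_ ?_
  · simpa [Function.comp_def, mopv] using ((continuous_mopv_left x).tendsto 0).comp hD
  · simpa only [Function.comp_def, mopv_smul] using ((continuous_mopv_left x).tendsto Δ).comp hcD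
  · simpa only [mopv_add, mopv_one] using hinv

theorem exists_trace_free_limit_direction {A : ℕ → SL3}
    (hA : Tendsto (fun n => (A n : M3)) atTop (𝓝 1)) (hA1 : ∀ n, A n ≠ 1) :
    ∃ Δ : M3, Δ ≠ 0 ∧ Δ.trace = 0 ∧ ∀ (h : E3 → ℝ) (x : E3), DifferentiableAt ℝ h x →
      (∀ n, h (mopv (A n) x) = h x) → ⟪gradient h x, mopv Δ x⟫ = 0 := by
  set D : ℕ → M3 := fun n => (A n : M3) - 1
  have hD : Tendsto D atTop (𝓝 0) := by simpa [D] using hA.sub_const 1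
  have hD_ne (n : ℕ) : D n ≠ 0 := sub_ne_zero.2 fun h1 => hA1 n (Subtype.ext h1)
  have hA_eq (n : ℕ) : 1 + D n = A n := add_sub_cancel _ _
  obtain ⟨Δ, hΔ, φ, hφ, hlim⟩ := exists_subseq_tendsto_inv_norm_smul hD_ne
  have hDφ := hD.comp hφ.tendsto_atTop
  refine ⟨Δ, hΔ, Matrix.trace_eq_zero_of_tendsto hDφ hlim (.of_forall fun k => ?_),
    fun h x hx hinv => inner_gradient_mopv_eq_zero_of_tendsto hx hDφ hlim (.of_forall fun k => ?_)⟩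
  · simp [hA_eq]
  · simpa [hA_eq] using hinv (φ k)

instance : IsFiniteMeasure σ := by unfold σ; infer_instance

lemma ae_comp_mopv_eq_of_integral_sq_eq_zero {h : E3 → ℝ} (hh : ContinuousOn h {0}ᶜ) (A : SL3)
    (h0 : ∫ x : S2, (h (mopv A x) - h x) ^ 2 ∂σ = 0) : ∀ᵐ x : S2 ∂σ, h (mopv A x) = h x := by
  have hcont : Continuous fun x : S2 => (h (mopv A x) - h x) ^ 2 := by
    refine ((hh.comp_continuous ((continuous_mopv_right A).comp continuous_subtype_val)
      fun x => mopv_ne_zero A (sphere_ne_zero x.2)).sub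
      (hh.comp_continuous continuous_subtype_val fun x => sphere_ne_zero x.2)).pow 2
  have hint := hcont.integrable_of_hasCompactSupport (μ := σ) (.of_compactSpace _)
  filter_upwards [(integral_eq_zero_iff_of_nonneg (fun x => sq_nonneg _) hint).1 h0] with x hx
  simpa [sub_eq_zero] using hx

theorem nondegenerate_isolated_minimum_general (h : E3 → ℝ)
    (hreg : ContDiffOn ℝ 2 h {(0 : E3)}ᶜ)
    (hnd : ∀ Δ : M3, Δ ≠ 0 → Δ.trace = 0 →
      0 < ∫ x : S2, ⟪gradient h ↑x, mopv Δ ↑x⟫ ^ 2 ∂σ)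
    (C : SL3 → ℝ)
    (hC : ∀ E : SL3, C E = (1 / 2) * ∫ x : S2, (h (mopv ↑(E⁻¹) ↑x) - h ↑x) ^ 2 ∂σ) :
    C 1 = 0 ∧ (∀ E : SL3, 0 ≤ C E) ∧
      ∃ U ∈ nhds ((1 : SL3) : M3), ∀ E : SL3, (E : M3) ∈ U → E ≠ 1 → 0 < C E := by
  have hC_nonneg (E : SL3) : 0 ≤ C E := by
    rw [hC]; exact mul_nonneg (by norm_num) (integral_nonneg fun x => sq_nonneg _)
  refine ⟨by simp [hC, mopv_one], hC_nonneg, ?_⟩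
  by_contra! hcon
  have hfreq : ∃ᶠ M in 𝓝 (1 : M3), ∃ E : SL3, (E : M3) = M ∧ E ≠ 1 ∧ C E ≤ 0 :=
    frequently_iff.2 fun {U} hU => by
      obtain ⟨E, hEU, hE⟩ := hcon U (by simpa using hU)
      exact ⟨E, hEU, E, rfl, hE⟩
  obtain ⟨M, hM, hM_SL⟩ := frequently_iff_seq_forall.1 hfreq
  choose E hEM hE1 hCE using hM_SL
  obtain ⟨Δ, hΔ, htr, hgrad⟩ := exists_trace_free_limit_direction (A := fun n => (E n)⁻¹)
    (Matrix.SpecialLinearGroup.tendsto_coe_inv (by simpa [hEM] using hM))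
    fun n => inv_ne_one.2 (hE1 n)
  have hinv : ∀ᵐ x : S2 ∂σ, ∀ n, h (mopv ((E n)⁻¹ : SL3) x) = h x :=
    ae_all_iff.2 fun n => ae_comp_mopv_eq_of_integral_sq_eq_zero hreg.continuousOn _
      (by linarith [hC (E n), hC_nonneg (E n), hCE n])
  refine (hnd Δ hΔ htr).ne' (integral_eq_zero_of_ae (hinv.mono fun x hx => ?_))
  have hx_diff : DifferentiableAt ℝ h x := (hreg.differentiableOn (by norm_num)).differentiableAt
    (isOpen_compl_singleton.mem_nhds (sphere_ne_zero x.2))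
  simp [hgrad h x hx_diff hx]

/-- non-degeneracy implies an isolated global minimum of the photometric
cost: if `∫⟨∇h(x), Δx⟩² dσ > 0` for every nonzero trace-free `Δ`, then the cost
`C(E) = ½∫(h(E⁻¹x) − h(x))² dσ` on SL(3,ℝ) satisfies `C(I₃) = 0`, `C ≥ 0`, and `I₃`
is an isolated minimum: on some neighborhood `U` of `I₃` (in the subspace topology of
SL(3,ℝ) ⊂ ℝ^{3×3}), `C(E) > 0` for `E ∈ U`, `E ≠ I₃`. -/
theorem nondegenerate_isolated_minimum (h : E3 → ℝ)
    (hreg : ContDiffOn ℝ 2 h {(0 : E3)}ᶜ)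
    (hhom : ∀ c : ℝ, 0 < c → ∀ x : E3, x ≠ 0 → h (c • x) = h x)
    (hnd : ∀ Δ : M3, Δ ≠ 0 → Δ.trace = 0 →
      0 < ∫ x : S2, ⟪gradient h ↑x, mopv Δ ↑x⟫ ^ 2 ∂σ)
    (C : SL3 → ℝ)
    (hC : ∀ E : SL3, C E = (1 / 2) * ∫ x : S2, (h (mopv ↑(E⁻¹) ↑x) - h ↑x) ^ 2 ∂σ) :
    C 1 = 0 ∧ (∀ E : SL3, 0 ≤ C E) ∧
      ∃ U ∈ nhds ((1 : SL3) : M3), ∀ E : SL3, (E : M3) ∈ U → E ≠ 1 → 0 < C E :=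
  nondegenerate_isolated_minimum_general h hreg hnd C hC
end
end

section
/- Lyapunov decrease identity for the gradient observer (core of Theorem 1): let h : ℝ³∖{0} → ℝ be twice continuously differentiable and 0-homogeneous, and let k > 0. Let E : ℝ → SL(3,ℝ) be differentiable and satisfy E′(t) = Δ(t) E(t), where the correction term is Δ(t) := k ∫_{S²} ( h(E(t)⁻¹x) − h(x) ) · ( E(t)⁻ᵀ ∇h(E(t)⁻¹x) ) xᵀ dσ(x) ∈ ℝ^{3×3}. Then the Lyapunov function L(t) := ½ ∫_{S²} ( h(E(t)⁻¹x) − h(x) )² dσ(x) is differentiable with L′(t) = −(1/k) ‖Δ(t)‖² ≤ 0 for all t, where ‖·‖ is the Frobenius norm. -/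
open Matrix MeasureTheory
open scoped RealInnerProductSpace

noncomputable section

/-- The Frobenius norm of a 3×3 real matrix, `‖A‖ = √tr(AᵀA)`. -/
def frobNorm (A : M3) : ℝ := Real.sqrt (∑ i, ∑ j, A i j ^ 2)

/-!
Since `E⁻¹` solves `(E⁻¹)′ = -E⁻¹Δ`, the chain rule gives, pointwise on the sphere,
`d/dt (h(E⁻¹x) - h(x))² = -2 (h(E⁻¹x) - h(x)) ⟪E⁻ᵀ∇h(E⁻¹x), Δx⟫`, which is `-2 ∑ᵢⱼ Δᵢⱼ cᵢⱼ(x)`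
where `c` is the integrand defining `Δ = k ∫ c dσ`. This derivative is jointly continuous in
`(t, x)`, so it may be integrated over the compact sphere, and `L′ = -∑ᵢⱼ Δᵢⱼ (Δᵢⱼ / k)`.
-/

section LinftyOpNorm

/- Derivatives of matrix-valued curves are taken for the `ℓ∞`-operator norm, which makes matrices
a normed algebra and induces the entrywise topology. -/
attribute [local instance] Matrix.linftyOpNormedAddCommGroup Matrix.linftyOpNormedSpace
  Matrix.linftyOpNormedRing Matrix.linftyOpNormedAlgebra

theorem Matrix.hasDerivAt_iff_apply {m n : Type*} [Fintype m] [Fintype n]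
    {f : ℝ → Matrix m n ℝ} {f' : Matrix m n ℝ} {t : ℝ} :
    HasDerivAt f f' t ↔ ∀ i j, HasDerivAt (fun s => f s i j) (f' i j) t := by
  refine hasDerivAt_iff_tendsto_slope.trans <| tendsto_pi_nhds.trans <| forall_congr' fun i =>
    tendsto_pi_nhds.trans <| forall_congr' fun j => hasDerivAt_iff_tendsto_slope.symm.trans ?_
  rfl

theorem Units.hasDerivAt_coe_inv {R : Type*} [NormedRing R] [HasSummableGeomSeries R]
    [NormedAlgebra ℝ R] {u : ℝ → Rˣ} {D : R} {t : ℝ}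
    (hu : HasDerivAt (fun s => (u s : R)) (D * u t) t) :
    HasDerivAt (fun s => (↑(u s)⁻¹ : R)) (-(↑(u t)⁻¹ * D)) t := by
  have hinv := (hasFDerivAt_ringInverse (𝕜 := ℝ) (u t)).comp_hasDerivAt t hu
  simp only [Function.comp_def, Ring.inverse_unit] at hinv
  exact hinv.congr_deriv (by simp [mul_assoc])

theorem Matrix.SpecialLinearGroup.hasDerivAt_coe_inv_apply {n : Type*} [Fintype n]
    [DecidableEq n] {E : ℝ → SpecialLinearGroup n ℝ} {D : Matrix n n ℝ} {t : ℝ}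
    (hE : ∀ i j, HasDerivAt (fun s => (E s : Matrix n n ℝ) i j) ((D * E t) i j) t) (i j : n) :
    HasDerivAt (fun s => (↑(E s)⁻¹ : Matrix n n ℝ) i j)
      ((-((↑(E t)⁻¹ : Matrix n n ℝ) * D)) i j) t := by
  have hGL := Units.hasDerivAt_coe_inv (u := fun s => toGL (E s))
    (Matrix.hasDerivAt_iff_apply.2 hE)
  simpa [← map_inv] using Matrix.hasDerivAt_iff_apply.1 hGL i j

theorem hasDerivAt_mopv {N : ℝ → M3} {D : M3} {t : ℝ}
    (hN : ∀ i j, HasDerivAt (fun s => N s i j) (D i j) t) (x : E3) :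
    HasDerivAt (fun s => mopv (N s) x) (mopv D x) t := by
  let ℓ : M3 →ₗ[ℝ] E3 :=
    { toFun := (mopv · x)
      map_add' := fun A B => by simp [mopv, Matrix.add_mulVec]
      map_smul' := fun c A => by simp [mopv, Matrix.smul_mulVec] }
  exact ℓ.toContinuousLinearMap.hasFDerivAt.comp_hasDerivAt t (Matrix.hasDerivAt_iff_apply.2 hN)

end LinftyOpNorm

theorem Matrix.continuous_of_hasDerivAt_apply {m n : Type*} {f f' : ℝ → Matrix m n ℝ}
    (hf : ∀ s i j, HasDerivAt (fun r => f r i j) (f' s i j) s) : Continuous f :=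
  continuous_pi fun i => continuous_pi fun j =>
    continuous_iff_continuousAt.2 fun s => (hf s i j).continuousAt

theorem ContDiffOn.continuousOn_gradient {F : Type*} [NormedAddCommGroup F]
    [InnerProductSpace ℝ F] [CompleteSpace F] {f : F → ℝ} {U : Set F} (hU : IsOpen U)
    (hf : ContDiffOn ℝ 1 f U) : ContinuousOn (gradient f) U :=
  (InnerProductSpace.toDual ℝ F).symm.continuous.comp_continuousOn
    (hf.continuousOn_fderiv_of_isOpen hU le_rfl)

theorem hasDerivAt_integral_of_continuous_deriv {X E : Type*} [TopologicalSpace X]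
    [CompactSpace X] [MeasurableSpace X] [OpensMeasurableSpace X] [NormedAddCommGroup E]
    [NormedSpace ℝ E] [SecondCountableTopologyEither X E] {μ : Measure X} [IsFiniteMeasure μ]
    {F F' : ℝ → X → E} (hF : ∀ s, Continuous (F s)) (hF' : Continuous F'.uncurry)
    (hderiv : ∀ s x, HasDerivAt (F · x) (F' s x) s) (t : ℝ) :
    HasDerivAt (fun s => ∫ x, F s x ∂μ) (∫ x, F' t x ∂μ) t := by
  obtain ⟨B, hB⟩ :=
    ((isCompact_closedBall t 1).prod isCompact_univ).exists_bound_of_continuousOn hF'.continuousOn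
  refine (hasDerivAt_integral_of_dominated_loc_of_deriv_le (bound := fun _ => B)
    (Metric.closedBall_mem_nhds t one_pos) (.of_forall fun s => (hF s).aestronglyMeasurable)
    ((hF t).integrable_of_hasCompactSupport (.of_compactSpace _))
    (hF'.comp (Continuous.prodMk_right t)).aestronglyMeasurable ?_ (integrable_const B)
    (.of_forall fun x s _ => hderiv s x)).2
  exact .of_forall fun x s hs => hB (s, x) ⟨hs, trivial⟩

theorem integral_sum_sum_mul {X ι κ : Type*} [MeasurableSpace X] [Fintype ι] [Fintype κ]
    {μ : Measure X} (a : ι → κ → ℝ) {f : X → ι → κ → ℝ}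
    (hf : ∀ i j, Integrable (fun x => f x i j) μ) :
    ∫ x, ∑ i, ∑ j, a i j * f x i j ∂μ = ∑ i, ∑ j, a i j * ∫ x, f x i j ∂μ := by
  rw [integral_finsetSum _ fun i _ => integrable_finsetSum _ fun j _ => (hf i j).const_mul _]
  refine Finset.sum_congr rfl fun i _ => ?_
  rw [integral_finsetSum _ fun j _ => (hf i j).const_mul _]
  simp only [integral_const_mul]

theorem mopv_apply (A : M3) (x : E3) (i : Fin 3) : mopv A x i = ∑ j, A i j * x j := rfl

theorem continuous_mopv : Continuous fun p : M3 × E3 => mopv p.1 p.2 :=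
  (PiLp.continuous_toLp 2 _).comp <|
    continuous_fst.matrix_mulVec ((PiLp.continuous_ofLp 2 _).comp continuous_snd)

theorem inner_mopv_mul (g x : E3) (N D : M3) :
    ⟪g, mopv (N * D) x⟫ = ∑ i, ∑ j, D i j * (mopv Nᵀ g i * x j) := by
  simp only [PiLp.inner_apply, RCLike.inner_apply, conj_trivial, mopv_apply, Matrix.mul_apply,
    Matrix.transpose_apply, Fin.sum_univ_three]
  ring

theorem frobNorm_sq (A : M3) : frobNorm A ^ 2 = ∑ i, ∑ j, A i j ^ 2 :=
  Real.sq_sqrt (by positivity)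

/-- `Δ(t) = k ∫ correctionIntegrand h (E t)⁻¹ x dσ(x)`. -/
def correctionIntegrand (h : E3 → ℝ) (A : M3) (x : E3) : M3 :=
  Matrix.of fun i j => (h (mopv A x) - h x) * (mopv Aᵀ (gradient h (mopv A x)) i * x j)

theorem continuousOn_sub_comp_mopv {h : E3 → ℝ} (hh : ContinuousOn h {0}ᶜ) :
    ContinuousOn (fun p : M3 × E3 => h (mopv p.1 p.2) - h p.2)
      {p | mopv p.1 p.2 ≠ 0 ∧ p.2 ≠ 0} :=
  (hh.comp continuous_mopv.continuousOn fun _ hp => hp.1).sub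
    (hh.comp continuous_snd.continuousOn fun _ hp => hp.2)

theorem continuousOn_correctionIntegrand {h : E3 → ℝ} (hh : ContDiffOn ℝ 1 h {0}ᶜ) :
    ContinuousOn (fun p : M3 × E3 => correctionIntegrand h p.1 p.2)
      {p | mopv p.1 p.2 ≠ 0 ∧ p.2 ≠ 0} := by
  have hgrad : ContinuousOn (fun p : M3 × E3 => mopv p.1ᵀ (gradient h (mopv p.1 p.2)))
      {p | mopv p.1 p.2 ≠ 0 ∧ p.2 ≠ 0} :=
    continuous_mopv.comp_continuousOn <| continuous_fst.matrix_transpose.continuousOn.prodMk <|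
      (hh.continuousOn_gradient isOpen_compl_singleton).comp continuous_mopv.continuousOn
        fun _ hp => hp.1
  have hcoord (i : Fin 3) : Continuous fun v : E3 => v i :=
    (continuous_apply i).comp (PiLp.continuous_ofLp 2 _)
  refine continuousOn_pi.2 fun i => continuousOn_pi.2 fun j => ?_
  exact (continuousOn_sub_comp_mopv hh.continuousOn).mul
    (((hcoord i).comp_continuousOn hgrad).mul ((hcoord j).comp continuous_snd).continuousOn)

theorem continuous_sq_sub_comp_mopv_sphere {h : E3 → ℝ} (hh : ContinuousOn h {0}ᶜ) (A : SL3) :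
    Continuous fun x : S2 => (h (mopv A x) - h x) ^ 2 :=
  ((continuousOn_sub_comp_mopv hh).comp_continuous
    (continuous_const.prodMk continuous_subtype_val)
    fun x => ⟨mopv_ne_zero A (sphere_ne_zero x.2), sphere_ne_zero x.2⟩).pow 2

theorem continuous_correctionIntegrand_sphere {h : E3 → ℝ} (hh : ContDiffOn ℝ 1 h {0}ᶜ)
    {N : ℝ → SL3} (hN : Continuous fun s => (N s : M3)) :
    Continuous fun p : ℝ × S2 => correctionIntegrand h (N p.1) p.2 :=
  (continuousOn_correctionIntegrand hh).comp_continuous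
    ((hN.comp continuous_fst).prodMk (continuous_subtype_val.comp continuous_snd))
    fun p => ⟨mopv_ne_zero _ (sphere_ne_zero p.2.2), sphere_ne_zero p.2.2⟩

theorem hasDerivAt_sq_sub_comp_mopv {h : E3 → ℝ} {N : ℝ → M3} {Δ : M3} {t : ℝ} {x : E3}
    (hh : DifferentiableAt ℝ h (mopv (N t) x))
    (hN : ∀ i j, HasDerivAt (fun s => N s i j) ((-(N t * Δ)) i j) t) :
    HasDerivAt (fun s => (h (mopv (N s) x) - h x) ^ 2)
      (-2 * ∑ i, ∑ j, Δ i j * correctionIntegrand h (N t) x i j) t := by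
  have hcomp := hh.hasFDerivAt.comp_hasDerivAt t (hasDerivAt_mopv hN x)
  rw [← inner_gradient_left, ← Matrix.mul_neg, inner_mopv_mul] at hcomp
  refine ((hcomp.sub_const (h x)).fun_pow 2).congr_deriv ?_
  simp only [correctionIntegrand, Function.comp_apply, Matrix.of_apply, Matrix.neg_apply,
    Fin.sum_univ_three]
  ring

instance isFiniteMeasure_σ : IsFiniteMeasure σ := by
  unfold σ
  infer_instance

theorem hasDerivAt_integral_sq_sub_comp_mopv {h : E3 → ℝ} (hh : ContDiffOn ℝ 1 h {0}ᶜ)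
    {N : ℝ → SL3} {Δ : ℝ → M3}
    (hN : ∀ s i j, HasDerivAt (fun r => (N r : M3) i j) ((-((N s : M3) * Δ s)) i j) s)
    (hΔ : ∀ i j, Continuous fun s => Δ s i j) (t : ℝ) :
    HasDerivAt (fun s => ∫ x : S2, (h (mopv (N s) x) - h x) ^ 2 ∂σ)
      (∫ x : S2, -2 * ∑ i, ∑ j, Δ t i j * correctionIntegrand h (N t) x i j ∂σ) t := by
  have hC := continuous_correctionIntegrand_sphere hh (Matrix.continuous_of_hasDerivAt_apply hN)
  refine hasDerivAt_integral_of_continuous_deriv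
    (fun s => continuous_sq_sub_comp_mopv_sphere hh.continuousOn (N s)) ?_
    (fun s x => hasDerivAt_sq_sub_comp_mopv ?_ (hN s)) t
  · exact continuous_const.mul <| continuous_finsetSum _ fun i _ => continuous_finsetSum _
      fun j _ => ((hΔ i j).comp continuous_fst).mul ((continuous_apply_apply i j).comp hC)
  · exact (hh.differentiableOn one_ne_zero).differentiableAt
      (isOpen_compl_singleton.mem_nhds (mopv_ne_zero (N s) (sphere_ne_zero x.2)))

theorem integral_neg_two_mul_sum_eq_frobNorm_sq {X : Type*} [MeasurableSpace X] {μ : Measure X}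
    {k : ℝ} (hk : k ≠ 0) {Δ : M3} {C : X → M3} (hC : ∀ i j, Integrable (fun x => C x i j) μ)
    (hΔ : ∀ i j, Δ i j = k * ∫ x, C x i j ∂μ) :
    ∫ x, -2 * ∑ i, ∑ j, Δ i j * C x i j ∂μ = -2 / k * frobNorm Δ ^ 2 := by
  have hCΔ (i j : Fin 3) : ∫ x, C x i j ∂μ = Δ i j / k := by
    rw [hΔ]
    field_simp
  rw [integral_const_mul, integral_sum_sum_mul Δ hC]
  simp only [hCΔ, frobNorm_sq, Fin.sum_univ_three]
  ring

theorem lyapunov_decrease_general (h : E3 → ℝ)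
    (hreg : ContDiffOn ℝ 2 h {(0 : E3)}ᶜ)
    (k : ℝ) (hk : 0 < k) (E : ℝ → SL3) (Δ : ℝ → M3)
    (hΔ : ∀ (t : ℝ) (i j : Fin 3), Δ t i j =
      k * ∫ x : S2, (h (mopv ↑((E t)⁻¹) ↑x) - h ↑x) *
        ((mopv ((↑((E t)⁻¹) : M3)ᵀ) (gradient h (mopv ↑((E t)⁻¹) ↑x))) i *
          (↑x : E3) j) ∂σ)
    (hE : ∀ (t : ℝ) (i j : Fin 3),
      HasDerivAt (fun s => ((E s : M3)) i j) ((Δ t * (E t : M3)) i j) t)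
    (L : ℝ → ℝ)
    (hL : ∀ t : ℝ, L t = (1 / 2) * ∫ x : S2, (h (mopv ↑((E t)⁻¹) ↑x) - h ↑x) ^ 2 ∂σ) :
    ∀ t : ℝ, HasDerivAt L (-(1 / k) * frobNorm (Δ t) ^ 2) t ∧
      -(1 / k) * frobNorm (Δ t) ^ 2 ≤ 0 := by
  have hh : ContDiffOn ℝ 1 h {0}ᶜ := hreg.of_le (by norm_num)
  have hinv (s : ℝ) := Matrix.SpecialLinearGroup.hasDerivAt_coe_inv_apply (hE s)
  have hC : Continuous fun p : ℝ × S2 => correctionIntegrand h ↑(E p.1)⁻¹ p.2 :=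
    continuous_correctionIntegrand_sphere (N := fun s => (E s)⁻¹) hh
      (Matrix.continuous_of_hasDerivAt_apply hinv)
  have hΔc (i j : Fin 3) : Continuous fun s => Δ s i j := by
    have hI := continuous_parametric_integral_of_continuous (μ := σ)
      (f := fun s x => correctionIntegrand h ↑(E s)⁻¹ x i j)
      ((continuous_apply_apply i j).comp hC) isCompact_univ
    simp only [Measure.restrict_univ] at hI
    exact (continuous_const.mul hI).congr fun s => (hΔ s i j).symm
  intro t
  have hint (i j : Fin 3) : Integrable (fun x : S2 => correctionIntegrand h ↑(E t)⁻¹ x i j) σ :=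
    ((continuous_apply_apply i j).comp (hC.comp (.prodMk_right t))).integrable_of_hasCompactSupport
      (.of_compactSpace _)
  have hLd := (hasDerivAt_integral_sq_sub_comp_mopv (N := fun s => (E s)⁻¹) hh hinv hΔc t).const_mul
    (1 / 2 : ℝ)
  rw [integral_neg_two_mul_sum_eq_frobNorm_sq hk.ne' hint (hΔ t)] at hLd
  rw [show L = _ from funext hL]
  exact ⟨hLd.congr_deriv (by ring),
    mul_nonpos_of_nonpos_of_nonneg (neg_nonpos.2 (by positivity)) (sq_nonneg _)⟩

/-- Lyapunov decrease identity for the gradient observer: if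
`E′ = ΔE` with correction `Δ(t) = k∫(h(E⁻¹x) − h(x))(E⁻ᵀ∇h(E⁻¹x))xᵀ dσ`, then
`L(t) = ½∫(h(E⁻¹x) − h(x))² dσ` satisfies `L′(t) = −(1/k)‖Δ(t)‖² ≤ 0`. -/
theorem lyapunov_decrease (h : E3 → ℝ)
    (hreg : ContDiffOn ℝ 2 h {(0 : E3)}ᶜ)
    (hhom : ∀ c : ℝ, 0 < c → ∀ x : E3, x ≠ 0 → h (c • x) = h x)
    (k : ℝ) (hk : 0 < k) (E : ℝ → SL3) (Δ : ℝ → M3)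
    (hΔ : ∀ (t : ℝ) (i j : Fin 3), Δ t i j =
      k * ∫ x : S2, (h (mopv ↑((E t)⁻¹) ↑x) - h ↑x) *
        ((mopv ((↑((E t)⁻¹) : M3)ᵀ) (gradient h (mopv ↑((E t)⁻¹) ↑x))) i *
          (↑x : E3) j) ∂σ)
    (hE : ∀ (t : ℝ) (i j : Fin 3),
      HasDerivAt (fun s => ((E s : M3)) i j) ((Δ t * (E t : M3)) i j) t)
    (L : ℝ → ℝ)
    (hL : ∀ t : ℝ, L t = (1 / 2) * ∫ x : S2, (h (mopv ↑((E t)⁻¹) ↑x) - h ↑x) ^ 2 ∂σ) :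
    ∀ t : ℝ, HasDerivAt L (-(1 / k) * frobNorm (Δ t) ^ 2) t ∧
      -(1 / k) * frobNorm (Δ t) ^ 2 ≤ 0 :=
  lyapunov_decrease_general h hreg k hk E Δ hΔ hE L hL
end
end
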